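/- Let F = ⟨f_1,…,f_r⟩ be a flip sequence realizing a shortest path from T_init to T_final, and let f_{s_1},…,f_{s_l} be the source nodes (nodes with no incoming arcs) of the DAG D_F. Then the underlying diagonals f_{s_1}^←,…,f_{s_l}^← are pairwise independent diagonals of T_init. -/

import Mathlib

open Finset

/-- Two vertices of the convex `m`-gon are adjacent in the cyclic order. -/
def PolyAdj (m : ℕ) (a b : Fin m) : Prop :=
  (a.val + 1) % m = b.val ∨ (b.val + 1) % m = a.val

/-- `e` is a diagonal of the convex `m`-gon: an unordered pair of distinct,
non-adjacent vertices. -/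
def IsDiagonal (m : ℕ) (e : Finset (Fin m)) : Prop :=
  ∃ a b : Fin m, a ≠ b ∧ ¬ PolyAdj m a b ∧ e = {a, b}

/-- The cyclic distance from `a` to `x`, going forwards in the cyclic order. -/
def cycDist (m : ℕ) (a x : Fin m) : ℕ := (x.val + m - a.val) % m

/-- `x` lies strictly between `a` and `b` in the cyclic order. -/
def CycBtw (m : ℕ) (a x b : Fin m) : Prop :=
  0 < cycDist m a x ∧ cycDist m a x < cycDist m a b

/-- Two chords cross: their endpoints strictly interleave in the cyclic order. -/
def Cross (m : ℕ) (e₁ e₂ : Finset (Fin m)) : Prop :=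
  ∃ a b c d : Fin m, e₁ = {a, b} ∧ e₂ = {c, d} ∧ CycBtw m a c b ∧ CycBtw m b d a

/-- A triangulation of the convex `m`-gon: a maximal set of pairwise
non-crossing diagonals. -/
structure Triangulation (m : ℕ) where
  diagonals : Finset (Finset (Fin m))
  isDiagonal : ∀ e ∈ diagonals, IsDiagonal m e
  noncross : ∀ e₁ ∈ diagonals, ∀ e₂ ∈ diagonals, ¬ Cross m e₁ e₂
  maximal : ∀ e, IsDiagonal m e → (∀ e' ∈ diagonals, ¬ Cross m e e') → e ∈ diagonals

/-- `e` is a side in the triangulation `T`: either an edge of the polygon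
(between cyclically adjacent vertices) or a diagonal of `T`. -/
def IsSide (m : ℕ) (T : Triangulation m) (e : Finset (Fin m)) : Prop :=
  (∃ a b : Fin m, PolyAdj m a b ∧ e = {a, b}) ∨ e ∈ T.diagonals

/-- `t` is a triangle of the triangulation `T`: three distinct vertices each
pair of which forms a side of `T`. -/
def IsTriangle (m : ℕ) (T : Triangulation m) (t : Finset (Fin m)) : Prop :=
  ∃ a b c : Fin m, a ≠ b ∧ a ≠ c ∧ b ≠ c ∧ t = {a, b, c} ∧
    IsSide m T {a, b} ∧ IsSide m T {a, c} ∧ IsSide m T {b, c}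

/-- Two diagonals of `T` are neighbors if they both belong to `T` and lie on a
common triangle of `T`; they are independent otherwise. -/
def Neighbor (m : ℕ) (T : Triangulation m) (e₁ e₂ : Finset (Fin m)) : Prop :=
  e₁ ∈ T.diagonals ∧ e₂ ∈ T.diagonals ∧
    ∃ t, IsTriangle m T t ∧ e₁ ⊆ t ∧ e₂ ⊆ t

/-- `T'` is obtained from `T` by flipping the diagonal `e`, which removes `e`
and creates the new diagonal `e'` (necessarily the opposite diagonal of the
quadrilateral formed by the two triangles of `T` containing `e`, since `T'` is
again a triangulation). -/
def IsFlip (m : ℕ) (T T' : Triangulation m) (e e' : Finset (Fin m)) : Prop :=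
  e ∈ T.diagonals ∧ e' ∉ T.diagonals ∧
    T'.diagonals = insert e' (T.diagonals.erase e)

/-- `Ts 0, Ts 1, …, Ts r` is a sequence of triangulations in which `Ts (i+1)`
is obtained from `Ts i` by performing the flip `F i`, which removes the
diagonal `(F i).1` and creates the diagonal `(F i).2`. -/
def IsFlipSeq (m r : ℕ) (F : ℕ → Finset (Fin m) × Finset (Fin m))
    (Ts : ℕ → Triangulation m) : Prop :=
  ∀ i < r, IsFlip m (Ts i) (Ts (i + 1)) (F i).1 (F i).2

/-- The flip distance between two triangulations: the minimum length of a flip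
sequence transforming one into the other. -/
noncomputable def FlipDist (m : ℕ) (T T' : Triangulation m) : ℕ :=
  sInf {r | ∃ F Ts, IsFlipSeq m r F Ts ∧ Ts 0 = T ∧ Ts r = T'}

/-- `e` is a free-diagonal of `T` with respect to `Tfinal`: flipping `e` in `T`
creates a diagonal belonging to `Tfinal`. -/
def FreeDiagonal (m : ℕ) (T Tfinal : Triangulation m) (e : Finset (Fin m)) : Prop :=
  ∃ T' e', IsFlip m T T' e e' ∧ e' ∈ Tfinal.diagonals

/-- Arc of the DAG `D_F` associated to the flip sequence `F` with triangulation
sequence `Ts`: there is an arc from flip `i` to flip `j` when `i < j` and the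
diagonal created by flip `i` is a neighbor of the diagonal removed by flip `j`
in the triangulation `Ts j` in which flip `j` is performed. -/
def Arc (m r : ℕ) (F : ℕ → Finset (Fin m) × Finset (Fin m))
    (Ts : ℕ → Triangulation m) (i j : ℕ) : Prop :=
  i < j ∧ j < r ∧ Neighbor m (Ts j) (F i).2 (F j).1

/-- Flip `i` is a source node of the DAG `D_F`: a node with no incoming arcs. -/
def IsSource (m r : ℕ) (F : ℕ → Finset (Fin m) × Finset (Fin m))
    (Ts : ℕ → Triangulation m) (i : ℕ) : Prop :=
  i < r ∧ ∀ j, ¬ Arc m r F Ts j i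


/-!
Let `i < j` be sources whose removed diagonals lie on a common triangle `t` of the initial
triangulation. Every neighbor of `(F j).1` in `Ts j` already lies in the initial triangulation
and is never flipped before step `j`: otherwise its creation would be an arc into `j`. So both
triangles of `Ts j` on `(F j).1` are triangles of the initial triangulation, and since a
triangulation has a unique triangle on each side of a diagonal, `t` is one of them. Thus
`(F i).1` is a neighbor of `(F j).1` in `Ts j`; having been removed at step `i < j`, it was
recreated in between, which is again an arc into `j`.
-/

theorem Finset.pair_eq_pair_iff {α : Type*} [DecidableEq α] {a b c d : α} :
    ({a, b} : Finset α) = {c, d} ↔ a = c ∧ b = d ∨ a = d ∧ b = c := by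
  rw [← Finset.coe_inj, Finset.coe_pair, Finset.coe_pair, Set.pair_eq_pair_iff]

theorem Finset.eq_pair_of_mem_of_card_eq_two {α : Type*} [DecidableEq α] {s : Finset α} {a : α}
    (hs : #s = 2) (ha : a ∈ s) : ∃ b, b ≠ a ∧ s = {a, b} := by
  obtain ⟨b, hb⟩ := Finset.card_eq_one.mp (by rw [Finset.card_erase_of_mem ha, hs] :
    #(s.erase a) = 1)
  refine ⟨b, (Finset.mem_erase.mp (hb ▸ Finset.mem_singleton_self b)).1, ?_⟩
  rw [← Finset.insert_erase ha, hb]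

theorem Finset.exists_common_of_card_eq_two {α : Type*} [DecidableEq α] {s t u : Finset α}
    (hs : #s = 2) (ht : #t = 2) (hst : s ≠ t) (hsu : s ⊆ u) (htu : t ⊆ u) (hu : #u = 3) :
    ∃ p w q, w ≠ q ∧ s = {p, w} ∧ t = {p, q} := by
  obtain ⟨p, hp⟩ : (s ∩ t).Nonempty := by
    rw [← Finset.not_disjoint_iff_nonempty_inter]
    intro hdisj
    have := Finset.card_le_card (Finset.union_subset hsu htu)
    rw [Finset.card_union_of_disjoint hdisj] at this
    omega
  obtain ⟨w, -, rfl⟩ := Finset.eq_pair_of_mem_of_card_eq_two hs (Finset.mem_inter.mp hp).1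
  obtain ⟨q, -, rfl⟩ := Finset.eq_pair_of_mem_of_card_eq_two ht (Finset.mem_inter.mp hp).2
  exact ⟨p, w, q, fun h => hst (h ▸ rfl), rfl, rfl⟩

variable {m : ℕ}

theorem cycBtw_iff {a x b : Fin m} :
    CycBtw m a x b ↔ a.val < x.val ∧ x.val < b.val ∨ b.val < a.val ∧ a.val < x.val ∨
      x.val < b.val ∧ b.val < a.val := by
  have := a.isLt; have := x.isLt; have := b.isLt
  have cycDist_eq (y : Fin m) :
      cycDist m a y = if a.val ≤ y.val then y.val - a.val else y.val + m - a.val := by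
    have := y.isLt
    unfold cycDist
    split_ifs
    · rw [show y.val + m - a.val = y.val - a.val + m by omega, Nat.add_mod_right]
      exact Nat.mod_eq_of_lt (by omega)
    · exact Nat.mod_eq_of_lt (by omega)
  unfold CycBtw
  rw [cycDist_eq, cycDist_eq]
  split_ifs <;> omega

theorem val_add_one_mod (k : Fin m) :
    (k.val + 1) % m = if k.val + 1 < m then k.val + 1 else 0 := by
  have := k.isLt
  split_ifs with hk
  · exact Nat.mod_eq_of_lt hk
  · rw [show k.val + 1 = m by omega, Nat.mod_self]

theorem polyAdj_iff {a b : Fin m} :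
    PolyAdj m a b ↔ a.val + 1 = b.val ∨ a.val + 1 = m ∧ b.val = 0 ∨
      b.val + 1 = a.val ∨ b.val + 1 = m ∧ a.val = 0 := by
  have := a.isLt; have := b.isLt
  unfold PolyAdj
  rw [val_add_one_mod, val_add_one_mod]
  split_ifs <;> omega

theorem CycBtw.ne {a x b : Fin m} (h : CycBtw m a x b) : x ≠ a ∧ x ≠ b ∧ a ≠ b := by
  simp only [cycBtw_iff] at h
  simp only [ne_eq, Fin.ext_iff]
  omega

theorem cycBtw_or_cycBtw {p q w : Fin m} (hwp : w ≠ p) (hwq : w ≠ q) (hpq : p ≠ q) :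
    CycBtw m p w q ∨ CycBtw m q w p := by
  simp only [ne_eq, Fin.ext_iff] at hwp hwq hpq
  simp only [cycBtw_iff]
  omega

theorem Cross.symm {e₁ e₂ : Finset (Fin m)} (h : Cross m e₁ e₂) : Cross m e₂ e₁ := by
  obtain ⟨a, b, c, d, rfl, rfl, h₁, h₂⟩ := h
  refine ⟨c, d, b, a, rfl, Finset.pair_comm a b, ?_, ?_⟩ <;>
    simp only [cycBtw_iff] at h₁ h₂ ⊢ <;> omega

theorem Cross.exists_of_left_eq_pair {x b : Fin m} {e : Finset (Fin m)}
    (h : Cross m {x, b} e) : ∃ u v, e = {u, v} ∧ CycBtw m x u b ∧ CycBtw m b v x := by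
  obtain ⟨a', b', c, d, hxb, rfl, h₁, h₂⟩ := h
  rcases Finset.pair_eq_pair_iff.mp hxb with ⟨rfl, rfl⟩ | ⟨rfl, rfl⟩
  · exact ⟨c, d, rfl, h₁, h₂⟩
  · exact ⟨d, c, Finset.pair_comm c d, h₂, h₁⟩

theorem not_cross_of_polyAdj {a b : Fin m} (h : PolyAdj m a b) (e : Finset (Fin m)) :
    ¬ Cross m {a, b} e := by
  intro hc
  obtain ⟨u, v, -, hu, hv⟩ := hc.exists_of_left_eq_pair
  have := v.isLt
  rw [polyAdj_iff] at h
  rw [cycBtw_iff] at hu hv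
  omega

theorem IsDiagonal.ne {p q : Fin m} (h : IsDiagonal m {p, q}) : p ≠ q := by
  obtain ⟨a, b, hab, -, he⟩ := h
  rcases Finset.pair_eq_pair_iff.mp he with ⟨rfl, rfl⟩ | ⟨rfl, rfl⟩
  exacts [hab, hab.symm]

theorem IsDiagonal.not_polyAdj {p q : Fin m} (h : IsDiagonal m {p, q}) : ¬ PolyAdj m p q := by
  obtain ⟨a, b, -, hadj, he⟩ := h
  rcases Finset.pair_eq_pair_iff.mp he with ⟨rfl, rfl⟩ | ⟨rfl, rfl⟩
  exacts [hadj, fun h => hadj h.symm]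

theorem IsDiagonal.card_eq_two {e : Finset (Fin m)} (h : IsDiagonal m e) : #e = 2 := by
  obtain ⟨a, b, hab, -, rfl⟩ := h
  exact Finset.card_pair hab

section Triangulation

variable {T : Triangulation m}

theorem IsSide.mem_diagonals {e : Finset (Fin m)} (hs : IsSide m T e) (hd : IsDiagonal m e) :
    e ∈ T.diagonals := by
  rcases hs with ⟨a, b, hadj, rfl⟩ | hs
  exacts [absurd hadj hd.not_polyAdj, hs]

theorem IsSide.not_cross {s e : Finset (Fin m)} (hs : IsSide m T s) (he : IsSide m T e) :
    ¬ Cross m s e := by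
  rcases hs with ⟨a, b, hadj, rfl⟩ | hs
  · exact not_cross_of_polyAdj hadj e
  rcases he with ⟨a, b, hadj, rfl⟩ | he
  · exact fun h => not_cross_of_polyAdj hadj s h.symm
  · exact T.noncross s hs e he

theorem exists_cross_of_not_isSide {x b : Fin m} (hxb : x ≠ b) (h : ¬ IsSide m T {x, b}) :
    ∃ e ∈ T.diagonals, Cross m {x, b} e := by
  by_contra! hc
  have hd : IsDiagonal m {x, b} :=
    ⟨x, b, hxb, fun hadj => h (Or.inl ⟨x, b, hadj, rfl⟩), rfl⟩
  exact h (Or.inr (T.maximal _ hd hc))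

theorem IsTriangle.isSide_of_mem {t : Finset (Fin m)} (ht : IsTriangle m T t) {u v : Fin m}
    (hu : u ∈ t) (hv : v ∈ t) (huv : u ≠ v) : IsSide m T {u, v} := by
  obtain ⟨a, b, c, -, -, -, rfl, hab, hac, hbc⟩ := ht
  simp only [Finset.mem_insert, Finset.mem_singleton] at hu hv
  rcases hu with rfl | rfl | rfl <;> rcases hv with rfl | rfl | rfl <;>
    first
      | exact absurd rfl huv
      | assumption
      | rwa [Finset.pair_comm]

theorem isTriangle_of_cycBtw {a x b : Fin m} (hx : CycBtw m a x b) (hax : IsSide m T {a, x})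
    (hab : IsSide m T {a, b}) (hxb : IsSide m T {x, b}) : IsTriangle m T {a, x, b} :=
  ⟨a, x, b, hx.ne.1.symm, hx.ne.2.2, hx.ne.2.1, rfl, hax, hab, hxb⟩

theorem isTriangle_comm {p x q : Fin m} :
    IsTriangle m T {p, x, q} ↔ IsTriangle m T {q, x, p} := by
  rw [show ({p, x, q} : Finset (Fin m)) = {q, x, p} by ext; simp; tauto]

/-- A diagonal crossing `{x, b}` crosses neither the side `{a, x}` nor the diagonal `{a, b}`,
so it ends at `a`. -/
theorem exists_farther_side {a b x : Fin m} (hab : {a, b} ∈ T.diagonals) (hx : CycBtw m a x b)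
    (hax : IsSide m T {a, x}) (hxb : ¬ IsSide m T {x, b}) :
    ∃ u, CycBtw m a u b ∧ CycBtw m a x u ∧ IsSide m T {a, u} := by
  obtain ⟨e, he, hcross⟩ := exists_cross_of_not_isSide hx.ne.2.1 hxb
  obtain ⟨u, v, rfl, hu, hv⟩ := hcross.exists_of_left_eq_pair
  have hu' : CycBtw m a u b ∧ CycBtw m a x u := by
    simp only [cycBtw_iff] at hx hu ⊢; omega
  have hv' : v = a ∨ (CycBtw m a v x ∧ CycBtw m x u a) ∨ CycBtw m b v a := by
    simp only [cycBtw_iff, Fin.ext_iff] at hx hu hv ⊢; omega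
  rcases hv' with rfl | ⟨hv', hxu⟩ | hv'
  · exact ⟨u, hu'.1, hu'.2, Or.inr (Finset.pair_comm u v ▸ he)⟩
  · exact (hax.not_cross (Or.inr he) ⟨a, x, v, u, rfl, Finset.pair_comm u v, hv', hxu⟩).elim
  · exact (T.noncross _ hab _ he ⟨a, b, u, v, rfl, rfl, hu'.1, hv'⟩).elim

theorem exists_apex {a b : Fin m} (hab : {a, b} ∈ T.diagonals) :
    ∃ x, CycBtw m a x b ∧ IsTriangle m T {a, x, b} := by
  classical
  have hd := T.isDiagonal _ hab
  obtain ⟨x₀, hx₀⟩ : ∃ x₀ : Fin m, x₀.val = (a.val + 1) % m :=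
    ⟨⟨_, Nat.mod_lt _ a.pos⟩, rfl⟩
  have hx₀b : CycBtw m a x₀ b := by
    have hne := Fin.val_ne_of_ne hd.ne
    have hnadj := hd.not_polyAdj
    have := b.isLt
    rw [val_add_one_mod] at hx₀
    rw [polyAdj_iff] at hnadj
    rw [cycBtw_iff]
    split_ifs at hx₀ <;> omega
  let S := Finset.univ.filter fun x => CycBtw m a x b ∧ IsSide m T {a, x}
  obtain ⟨x, hxS, hmax⟩ := Finset.exists_max_image S (cycDist m a)
    ⟨x₀, Finset.mem_filter.mpr
      ⟨Finset.mem_univ _, hx₀b, Or.inl ⟨a, x₀, Or.inl hx₀.symm, rfl⟩⟩⟩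
  obtain ⟨-, hx, hax⟩ := Finset.mem_filter.mp hxS
  refine ⟨x, hx, isTriangle_of_cycBtw hx hax (Or.inr hab) ?_⟩
  by_contra hxb
  obtain ⟨u, hu, hxu, hau⟩ := exists_farther_side hab hx hax hxb
  exact absurd (hmax u (Finset.mem_filter.mpr ⟨Finset.mem_univ _, hu, hau⟩)) (not_le.mpr hxu.2)

theorem apex_unique {p q x w : Fin m} (hx : CycBtw m p x q) (hw : CycBtw m p w q)
    (htx : IsTriangle m T {p, x, q}) (htw : IsTriangle m T {p, w, q}) : x = w := by
  wlog hxw : CycBtw m p x w generalizing x w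
  · have hwx : x = w ∨ CycBtw m p w x := by
      simp only [cycBtw_iff, Fin.ext_iff] at hx hw hxw ⊢; omega
    exact hwx.elim id fun hwx => (this hw hx htw htx hwx).symm
  have hxq := htx.isSide_of_mem (by simp) (by simp) hx.ne.2.1
  have hpw := htw.isSide_of_mem (by simp) (by simp) hw.ne.1.symm
  refine absurd ⟨x, q, w, p, rfl, Finset.pair_comm p w, ?_, ?_⟩ (hxq.not_cross hpw) <;>
    simp only [cycBtw_iff] at hx hw hxw ⊢ <;> omega

theorem neighbor_self_of_mem {e : Finset (Fin m)} (he : e ∈ T.diagonals) : Neighbor m T e e := by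
  obtain ⟨a, b, -, -, rfl⟩ := T.isDiagonal e he
  obtain ⟨x, -, htx⟩ := exists_apex he
  have hsub : ({a, b} : Finset (Fin m)) ⊆ {a, x, b} := by simp [Finset.insert_subset_iff]
  exact ⟨he, he, _, htx, hsub, hsub⟩

theorem Neighbor.symm {e₁ e₂ : Finset (Fin m)} (h : Neighbor m T e₁ e₂) :
    Neighbor m T e₂ e₁ :=
  let ⟨h₁, h₂, t, ht, h₁t, h₂t⟩ := h
  ⟨h₂, h₁, t, ht, h₂t, h₁t⟩

/-- Both triangulations have exactly one triangle on each side of `{p, q}`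
(`exists_apex`, `apex_unique`). -/
theorem isTriangle_of_forall_isTriangle {T' : Triangulation m} {p q w : Fin m}
    (hpq : {p, q} ∈ T'.diagonals) (hwp : w ≠ p) (hwq : w ≠ q)
    (hT : ∀ x, IsTriangle m T' {p, x, q} → IsTriangle m T {p, x, q})
    (htw : IsTriangle m T {p, w, q}) : IsTriangle m T' {p, w, q} := by
  rcases cycBtw_or_cycBtw hwp hwq (T'.isDiagonal _ hpq).ne with hw | hw
  · obtain ⟨x, hx, htx⟩ := exists_apex hpq
    rwa [apex_unique hx hw (hT x htx) htw] at htx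
  · obtain ⟨x, hx, htx⟩ := exists_apex (Finset.pair_comm p q ▸ hpq)
    have hxw := apex_unique hx hw (isTriangle_comm.mp (hT x (isTriangle_comm.mp htx)))
      (isTriangle_comm.mp htw)
    rw [hxw] at htx
    exact isTriangle_comm.mp htx

end Triangulation

section FlipSeq

variable {r : ℕ} {F : ℕ → Finset (Fin m) × Finset (Fin m)} {Ts : ℕ → Triangulation m}

theorem IsFlipSeq.not_mem_succ (hseq : IsFlipSeq m r F Ts) {i : ℕ} (hi : i < r) :
    (F i).1 ∉ (Ts (i + 1)).diagonals := by
  obtain ⟨-, hnew, hTs⟩ := hseq i hi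
  rw [hTs, Finset.mem_insert, Finset.mem_erase]
  rintro (h | ⟨hne, -⟩)
  exacts [hnew (h ▸ (hseq i hi).1), hne rfl]

theorem IsFlipSeq.exists_create (hseq : IsFlipSeq m r F Ts) {e : Finset (Fin m)} {s t : ℕ}
    (hst : s ≤ t) (htr : t ≤ r) (hs : e ∉ (Ts s).diagonals) (ht : e ∈ (Ts t).diagonals) :
    ∃ k, s ≤ k ∧ k < t ∧ (F k).2 = e := by
  induction t, hst using Nat.le_induction with
  | base => exact absurd ht hs
  | succ t hst ih =>
    by_cases het : e ∈ (Ts t).diagonals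
    · obtain ⟨k, hsk, hkt, hk⟩ := ih (by omega) het
      exact ⟨k, hsk, by omega, hk⟩
    · refine ⟨t, hst, by omega, ?_⟩
      rw [(hseq t (by omega)).2.2, Finset.mem_insert] at ht
      exact (ht.resolve_right fun h => het (Finset.mem_of_mem_erase h)).symm

namespace IsSource

variable {j : ℕ}

theorem mem_of_neighbor (hj : IsSource m r F Ts j) (hseq : IsFlipSeq m r F Ts)
    {e : Finset (Fin m)} (he : Neighbor m (Ts j) e (F j).1) {k : ℕ} (hk : k ≤ j) :
    e ∈ (Ts k).diagonals := by
  by_contra hek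
  obtain ⟨l, -, hlj, rfl⟩ := hseq.exists_create hk hj.1.le hek he.1
  exact hj.2 l ⟨hlj, hj.1, he⟩

theorem mem_init (hj : IsSource m r F Ts j) (hseq : IsFlipSeq m r F Ts) :
    (F j).1 ∈ (Ts 0).diagonals :=
  mem_of_neighbor hj hseq (neighbor_self_of_mem (hseq j hj.1).1) (Nat.zero_le j)

theorem isTriangle_init (hj : IsSource m r F Ts j) (hseq : IsFlipSeq m r F Ts)
    {t : Finset (Fin m)} (ht : IsTriangle m (Ts j) t) (hjt : (F j).1 ⊆ t) :
    IsTriangle m (Ts 0) t := by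
  have side_init {s : Finset (Fin m)} (hs : IsSide m (Ts j) s) (hst : s ⊆ t) :
      IsSide m (Ts 0) s :=
    hs.imp id fun h =>
      mem_of_neighbor hj hseq ⟨h, (hseq j hj.1).1, t, ht, hst, hjt⟩ (Nat.zero_le j)
  obtain ⟨a, b, c, hab, hac, hbc, rfl, s₁, s₂, s₃⟩ := ht
  exact ⟨a, b, c, hab, hac, hbc, rfl, side_init s₁ (by simp [Finset.insert_subset_iff]),
    side_init s₂ (by simp [Finset.insert_subset_iff]),
    side_init s₃ (by simp [Finset.subset_iff])⟩

theorem neighbor_of_isTriangle_init (hj : IsSource m r F Ts j) (hseq : IsFlipSeq m r F Ts)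
    {e t : Finset (Fin m)} (he : e ∈ (Ts 0).diagonals)
    (ht : IsTriangle m (Ts 0) t) (het : e ⊆ t) (hjt : (F j).1 ⊆ t) :
    Neighbor m (Ts j) e (F j).1 := by
  have hjmem := (hseq j hj.1).1
  by_cases heq : e = (F j).1
  · rw [heq]
    exact neighbor_self_of_mem hjmem
  have ht3 : #t = 3 := by
    obtain ⟨a, b, c, hab, hac, hbc, rfl, -⟩ := ht
    exact Finset.card_eq_three.mpr ⟨a, b, c, hab, hac, hbc, rfl⟩
  have hj0 := mem_init hj hseq
  obtain ⟨p, w, q, hwq, rfl, hpq⟩ := Finset.exists_common_of_card_eq_two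
    ((Ts 0).isDiagonal _ he).card_eq_two ((Ts 0).isDiagonal _ hj0).card_eq_two heq het hjt ht3
  rw [hpq] at hjmem hj0 hjt ⊢
  have hpw := ((Ts 0).isDiagonal _ he).ne
  have htw : IsTriangle m (Ts 0) {p, w, q} :=
    ⟨p, w, q, hpw, ((Ts 0).isDiagonal _ hj0).ne, hwq, rfl, Or.inr he, Or.inr hj0,
      ht.isSide_of_mem (het (by simp)) (hjt (by simp)) hwq⟩
  have htw' := isTriangle_of_forall_isTriangle hjmem hpw.symm hwq
    (fun x hx => isTriangle_init hj hseq hx (by simp [hpq, Finset.insert_subset_iff])) htw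
  refine ⟨(htw'.isSide_of_mem (by simp) (by simp) hpw).mem_diagonals ((Ts 0).isDiagonal _ he),
    hjmem, _, htw', by simp [Finset.insert_subset_iff], by simp [Finset.insert_subset_iff]⟩

theorem not_neighbor_init_of_lt {i : ℕ} (hi : IsSource m r F Ts i)
    (hj : IsSource m r F Ts j) (hseq : IsFlipSeq m r F Ts) (hij : i < j) :
    ¬ Neighbor m (Ts 0) (F i).1 (F j).1 := by
  rintro ⟨hi0, -, t, ht, hit, hjt⟩
  exact hseq.not_mem_succ hi.1 (hj.mem_of_neighbor hseq
    (hj.neighbor_of_isTriangle_init hseq hi0 ht hit hjt) hij)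

end IsSource

end FlipSeq

theorem source_diagonals_independent_general (m : ℕ)
    (Tinit : Triangulation m)
    (r : ℕ) (F : ℕ → Finset (Fin m) × Finset (Fin m)) (Ts : ℕ → Triangulation m)
    (hseq : IsFlipSeq m r F Ts) (h0 : Ts 0 = Tinit)
    (i j : ℕ) (hsi : IsSource m r F Ts i) (hsj : IsSource m r F Ts j)
    (hij : i ≠ j) :
    (F i).1 ∈ Tinit.diagonals ∧ (F j).1 ∈ Tinit.diagonals ∧
      ¬ Neighbor m Tinit (F i).1 (F j).1 := by
  subst h0
  refine ⟨hsi.mem_init hseq, hsj.mem_init hseq, fun h => ?_⟩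
  rcases hij.lt_or_gt with hij | hji
  · exact hsi.not_neighbor_init_of_lt hsj hseq hij h
  · exact hsj.not_neighbor_init_of_lt hsi hseq hji h.symm

/-- Let `F` be a flip sequence realizing a shortest path from `Tinit` to
`Tfinal`, and let `i, j` be two distinct source nodes (nodes with no incoming
arcs) of the DAG `D_F`. Then the underlying diagonals `(F i).1` and `(F j).1`
are diagonals of `Tinit`, and they are independent in `Tinit` (they do not lie
on a common triangle of `Tinit`); i.e. the underlying diagonals of the source
nodes are pairwise independent diagonals of `Tinit`. -/
theorem source_diagonals_independent (m : ℕ) (hm : 3 ≤ m)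
    (Tinit Tfinal : Triangulation m)
    (r : ℕ) (F : ℕ → Finset (Fin m) × Finset (Fin m)) (Ts : ℕ → Triangulation m)
    (hseq : IsFlipSeq m r F Ts) (h0 : Ts 0 = Tinit) (hr : Ts r = Tfinal)
    (hmin : r = FlipDist m Tinit Tfinal)
    (i j : ℕ) (hsi : IsSource m r F Ts i) (hsj : IsSource m r F Ts j)
    (hij : i ≠ j) :
    (F i).1 ∈ Tinit.diagonals ∧ (F j).1 ∈ Tinit.diagonals ∧
      ¬ Neighbor m Tinit (F i).1 (F j).1 :=
  source_diagonals_independent_general m Tinit r F Ts hseq h0 i j hsi hsj hij
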